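/- For any μ > 0, any finite label set Y, scoring functions f, f' : X → (Y → ℝ), and any labeled sample (x, y), the inequality W_μ(ω_{f'}(x, h_f(x))) ≤ W_μ(ω_f(x, y)) + W_μ(ω_{f'}(x, y)) holds, where ω_f(x,y) = (f(x)(y) - max_{y' ≠ y} f(x)(y'))/2 is the margin and h_f(x) = argmax_y f(x)(y) is the induced labeling function. -/

import Mathlib

/-- The ramp loss `W_μ`. -/
noncomputable def ramp (μ v : ℝ) : ℝ :=
  if μ ≤ v then 0 else if v ≤ 0 then 1 else 1 - v / μ

/-- The margin `ω_f(x,y) = (f(x)(y) - max_{y' ≠ y} f(x)(y'))/2` of a scoring function. -/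
noncomputable def margin {X Y : Type*} [Fintype Y] [DecidableEq Y] [Nontrivial Y]
    (f : X → Y → ℝ) (x : X) (y : Y) : ℝ :=
  (f x y - (Finset.univ.erase y).sup'
      (by obtain ⟨b, hb⟩ := exists_ne y
          exact ⟨b, Finset.mem_erase.mpr ⟨hb, Finset.mem_univ b⟩⟩) (f x)) / 2

lemma ramp_nonneg (μ v : ℝ) : 0 ≤ ramp μ v := by
  unfold ramp
  split_ifs with hμv hv
  · exact le_rfl
  · exact zero_le_one
  · push Not at hμv hv
    have : v / μ ≤ 1 := (div_le_one (hv.trans hμv)).mpr hμv.le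
    linarith

lemma ramp_le_one (μ v : ℝ) : ramp μ v ≤ 1 := by
  unfold ramp
  split_ifs with hμv hv
  · exact zero_le_one
  · exact le_rfl
  · push Not at hμv hv
    have : 0 < v / μ := div_pos hv (hv.trans hμv)
    linarith

lemma ramp_of_nonpos {μ v : ℝ} (hμ : 0 < μ) (hv : v ≤ 0) : ramp μ v = 1 := by
  rw [ramp, if_neg (by linarith), if_pos hv]

lemma margin_nonpos_of_le {X Y : Type*} [Fintype Y] [DecidableEq Y] [Nontrivial Y]
    {f : X → Y → ℝ} {x : X} {y y' : Y} (hne : y' ≠ y) (hle : f x y ≤ f x y') :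
    margin f x y ≤ 0 := by
  have hy' : f x y' ≤ (Finset.univ.erase y).sup' _ (f x) :=
    Finset.le_sup' (f x) (Finset.mem_erase.mpr ⟨hne, Finset.mem_univ y'⟩)
  rw [margin]
  linarith

/-- Subadditivity of the ramp-margin loss:
`W_μ(ω_{f'}(x, h_f(x))) ≤ W_μ(ω_f(x,y)) + W_μ(ω_{f'}(x,y))`,
where `hf` is the labeling function induced by `f` (an argmax of `f x`). -/
theorem ramp_margin_subadd {X Y : Type*} [Fintype Y] [DecidableEq Y] [Nontrivial Y]
    (μ : ℝ) (hμ : 0 < μ) (f f' : X → Y → ℝ) (hf : X → Y)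
    (hargmax : ∀ x y, f x y ≤ f x (hf x)) (x : X) (y : Y) :
    ramp μ (margin f' x (hf x)) ≤ ramp μ (margin f x y) + ramp μ (margin f' x y) := by
  by_cases hxy : hf x = y
  · rw [hxy]
    linarith [ramp_nonneg μ (margin f x y)]
  · rw [ramp_of_nonpos hμ (margin_nonpos_of_le hxy (hargmax x y))]
    linarith [ramp_nonneg μ (margin f' x y), ramp_le_one μ (margin f' x (hf x))]
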